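/- arXiv:2202.02381 — 9 statements merged into one kernel-verified Lean document; each statement's English description precedes it below -/
import Mathlib

section
/- If ⟨i, y_i⟩ and ⟨i+1, y_{i+1}⟩ are consecutive pairs in the strange-root process (i.e., y_i > i and y_{i+1} is the least integer with (i+1)·y_{i+1} > i·(y_i + 1)), then y_{i+1} ≤ y_i. -/
/-- If `⟨i, y⟩` and `⟨i+1, y'⟩` are consecutive pairs of the strange-root
process (`y > i` and `y'` is the least integer with `(i+1)*y' > i*(y+1)`),
then `y' ≤ y`. -/
theorem srStep_le (i y y' : ℕ) (hi : 1 ≤ i) (hy : i < y)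
    (h1 : i * (y + 1) < (i + 1) * y')
    (h2 : ∀ z : ℕ, i * (y + 1) < (i + 1) * z → y' ≤ z) :
    y' ≤ y := h2 y (by nlinarith)
end

section
/- If ⟨i, y_i⟩ and ⟨i+1, y_{i+1}⟩ are consecutive pairs in the strange-root process (i.e., y_i > i and y_{i+1} is the least integer with (i+1)·y_{i+1} > i·(y_i + 1)), then y_{i+1} ≥ i + 1. -/
/-- If `⟨i, y⟩` and `⟨i+1, y'⟩` are consecutive pairs of the strange-root
process (`y > i` and `y'` is the least integer with `(i+1)*y' > i*(y+1)`),
then `y' ≥ i + 1`. -/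
theorem srStep_ge (i y y' : ℕ) (hi : 1 ≤ i) (hy : i < y)
    (h1 : i * (y + 1) < (i + 1) * y')
    (h2 : ∀ z : ℕ, i * (y + 1) < (i + 1) * z → y' ≤ z) :
    i + 1 ≤ y' := by
  by_contra h
  push_neg at h
  nlinarith
end

section
/- For every positive integer n, the strange-root process starting from ⟨1, n⟩ terminates, and its final pair ⟨r, y_r⟩ satisfies y_r = r. (That is, the process ends in a pair of equal integers.) -/
/-- The next value in the strange-root process: the least integer `z` with
`(i+1)*z > i*(y+1)`. -/
def srStep (i y : ℕ) : ℕ := i * (y + 1) / (i + 1) + 1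

/-- `srY n i` is the second coordinate `y_i` of the `i`-th pair of the
strange-root process started at `⟨1, n⟩` (indices start at 1). -/
def srY (n : ℕ) : ℕ → ℕ
  | 0 => n
  | 1 => n
  | (i+2) => srStep (i+1) (srY n (i+1))

/-- The strange root of `n`: the first index `r ≥ 1` with `y_r ≤ r`. -/
noncomputable def sr (n : ℕ) : ℕ := sInf {r | 1 ≤ r ∧ srY n r ≤ r}

lemma srStep_le_s2 (i y : ℕ) (h : i < y) : srStep i y ≤ y := by
  have hq : i * (y + 1) / (i + 1) < y := by
    rw [Nat.div_lt_iff_lt_mul (Nat.succ_pos i)]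
    nlinarith
  unfold srStep; omega

lemma srStep_ge_s2 (i y : ℕ) (h : i + 1 ≤ y) : i + 1 ≤ srStep i y := by
  have hq : i ≤ i * (y + 1) / (i + 1) := by
    rw [Nat.le_div_iff_mul_le (Nat.succ_pos i)]
    nlinarith
  unfold srStep; omega

lemma srY_le (n : ℕ) : ∀ j, 1 ≤ j → (∀ k, 1 ≤ k → k < j → k < srY n k) →
    srY n j ≤ n := by
  intro j
  induction j with
  | zero => omega
  | succ j ih =>
    intro _ h
    rcases Nat.eq_or_lt_of_le (Nat.one_le_iff_ne_zero.mpr (Nat.succ_ne_zero j)) with h1 | h1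
    · have hj0 : j = 0 := by omega
      subst hj0
      exact le_of_eq rfl
    · have hj : 1 ≤ j := by omega
      obtain ⟨j, rfl⟩ : ∃ m, j = m + 1 := ⟨j - 1, by omega⟩
      have hle : srY n (j + 1) ≤ n := ih hj (fun k hk hk' => h k hk (by omega))
      have hstep : srY n (j + 2) = srStep (j + 1) (srY n (j + 1)) := rfl
      have hlt : j + 1 < srY n (j + 1) := h (j + 1) hj (by omega)
      calc srY n (j + 2) ≤ srY n (j + 1) := by rw [hstep]; exact srStep_le_s2 _ _ hlt
        _ ≤ n := hle

/-- For every positive integer `n` the strange-root process starting at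
`⟨1, n⟩` terminates, and its final pair `⟨r, y_r⟩` satisfies `y_r = r`. -/
theorem strange_root_process_terminates_equal (n : ℕ) (hn : 1 ≤ n) :
    ∃ r : ℕ, 1 ≤ r ∧ (∀ j, 1 ≤ j → j < r → j < srY n j) ∧
      srY n r ≤ r ∧ srY n r = r := by
  have hne : {r | 1 ≤ r ∧ srY n r ≤ r}.Nonempty := by
    by_contra hcon
    rw [Set.not_nonempty_iff_eq_empty] at hcon
    have hall : ∀ k, 1 ≤ k → k < srY n k := by
      intro k hk
      by_contra hk'
      have : k ∈ {r | 1 ≤ r ∧ srY n r ≤ r} := ⟨hk, by omega⟩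
      rw [hcon] at this; exact this
    have := srY_le n n hn (fun k hk _ => hall k hk)
    have := hall n hn
    omega
  set S := {r | 1 ≤ r ∧ srY n r ≤ r}
  have hmem : sInf S ∈ S := Nat.sInf_mem hne
  obtain ⟨hr1, hrle⟩ := hmem
  have hmin : ∀ j, 1 ≤ j → j < sInf S → j < srY n j := by
    intro j hj hjlt
    by_contra hj'
    have : j ∈ S := ⟨hj, by omega⟩
    have := Nat.sInf_le this
    omega
  refine ⟨sInf S, hr1, hmin, hrle, ?_⟩
  rcases Nat.eq_or_lt_of_le hr1 with h1 | h1
  · rw [← h1] at hrle ⊢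
    have : srY n 1 = n := rfl
    omega
  · obtain ⟨m, hm⟩ : ∃ m, sInf S = m + 2 := ⟨sInf S - 2, by omega⟩
    have hprev : m + 1 < srY n (m + 1) := hmin (m + 1) (by omega) (by omega)
    have hstep : srY n (m + 2) = srStep (m + 1) (srY n (m + 1)) := rfl
    have := srStep_ge_s2 (m + 1) (srY n (m + 1)) (by omega)
    rw [hm] at hrle ⊢
    omega
end

section
/- The strange root function is monotone: for positive integers n₁ ≤ n₂, one has sr(n₁) ≤ sr(n₂). -/
/-!
Each step `y ↦ srStep i y` is monotone, so the trajectory `y_i` is monotone in the starting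
value `n`; hence the stopping index of the larger start is also a stopping index of the
smaller one. The process always stops because `y_i ≤ max n i`: a value above the index never
grows, and one at most the index stays at most the next index.
-/

lemma srStep_mono_s3 (i : ℕ) : Monotone (srStep i) := fun _ _ h =>
  Nat.add_le_add_right (Nat.div_le_div_right (Nat.mul_le_mul_left _ (Nat.succ_le_succ h))) 1

lemma srStep_le_self {i y : ℕ} (h : i < y) : srStep i y ≤ y := by
  have : i * (y + 1) / (i + 1) < y := by
    rw [Nat.div_lt_iff_lt_mul i.succ_pos]
    nlinarith
  unfold srStep
  omega

lemma srStep_le_succ {i y : ℕ} (h : y ≤ i) : srStep i y ≤ i + 1 := by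
  have : i * (y + 1) / (i + 1) ≤ i := by
    rw [Nat.div_le_iff_le_mul_add_pred i.succ_pos]
    nlinarith
  unfold srStep
  omega

lemma srY_le_max (n : ℕ) : ∀ i, srY n i ≤ max n i
  | 0 => le_max_left n 0
  | 1 => le_max_left n 1
  | i + 2 => by
    show srStep (i + 1) (srY n (i + 1)) ≤ max n (i + 2)
    rcases le_or_gt (srY n (i + 1)) (i + 1) with hle | hlt
    · exact (srStep_le_succ hle).trans (le_max_right _ _)
    · exact (srStep_le_self hlt).trans ((srY_le_max n (i + 1)).trans (by omega))

lemma srY_mono {n₁ n₂ : ℕ} (h : n₁ ≤ n₂) : ∀ i, srY n₁ i ≤ srY n₂ i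
  | 0 => h
  | 1 => h
  | i + 2 => srStep_mono_s3 (i + 1) (srY_mono h (i + 1))

lemma sr_mem (n : ℕ) : sr n ∈ {r | 1 ≤ r ∧ srY n r ≤ r} :=
  Nat.sInf_mem ⟨n + 1, n.succ_pos, (srY_le_max n (n + 1)).trans (max_le n.le_succ le_rfl)⟩

theorem sr_monotone_general (n₁ n₂ : ℕ) (h : n₁ ≤ n₂) :
    sr n₁ ≤ sr n₂ := by
  obtain ⟨hpos, hstop⟩ := sr_mem n₂
  exact Nat.sInf_le ⟨hpos, (srY_mono h _).trans hstop⟩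

/-- Monotonicity of the strange root: `n₁ ≤ n₂ → sr n₁ ≤ sr n₂`. -/
theorem sr_monotone (n₁ n₂ : ℕ) (h₁ : 1 ≤ n₁) (h : n₁ ≤ n₂) :
    sr n₁ ≤ sr n₂ :=
  sr_monotone_general n₁ n₂ h
end

section
/- In the strange-root process, if x_i ≤ y_i and ⟨i, x_i⟩ → ⟨i+1, x_{i+1}⟩ and ⟨i, y_i⟩ → ⟨i+1, y_{i+1}⟩ are transitions of the process, then x_{i+1} ≤ y_{i+1}. -/
/-- If `x_i ≤ y_i` and `⟨i, x_i⟩ → ⟨i+1, x'⟩`, `⟨i, y_i⟩ → ⟨i+1, y'⟩` are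
transitions of the strange-root process, then `x' ≤ y'`. -/
theorem srStep_mono (i x y x' y' : ℕ) (hi : 1 ≤ i)
    (hx : i < x) (hy : i < y) (hxy : x ≤ y)
    (hx1 : i * (x + 1) < (i + 1) * x')
    (hx2 : ∀ z : ℕ, i * (x + 1) < (i + 1) * z → x' ≤ z)
    (hy1 : i * (y + 1) < (i + 1) * y')
    (hy2 : ∀ z : ℕ, i * (y + 1) < (i + 1) * z → y' ≤ z) :
    x' ≤ y' := by
  exact hx2 y' (lt_of_le_of_lt (Nat.mul_le_mul_left i (by omega)) hy1)
end

section
/- Let n be a positive integer and let y_1 = n, y_2, …, y_r be the second coordinates of the strange-root process starting at ⟨1, n⟩ and terminating at ⟨r, r⟩. Define w_i = y_i − y_{i+1} + 1 for 1 ≤ i ≤ r−1. Then w_i = ⌈(n − 1 − (w_1 + ⋯ + w_{i−1})) / (i+1)⌉ for all i = 1, …, r−1. -/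
/-!
The `w_j` telescope: `w_1 + ⋯ + w_(i-1) = n - y_i + (i - 1)`, so the right-hand side is
`⌈(y_i - i)/(i+1)⌉`. Since `y_(i+1) = ⌊i(y_i+1)/(i+1)⌋ + 1`, this ceiling is exactly
`y_i - y_(i+1) + 1`.
-/

theorem Finset.sum_Ico_sub_succ_add_one {R : Type*} [CommRing R] (f : ℕ → R) {m n : ℕ}
    (hmn : m ≤ n) : ∑ j ∈ Ico m n, (f j - f (j + 1) + 1) = f m - f n + ((n : R) - m) := by
  rw [sum_add_distrib, sum_sub_distrib, ← neg_sub, ← sum_sub_distrib, sum_Ico_sub f hmn,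
    sum_const, Nat.card_Ico, nsmul_one, Nat.cast_sub hmn]
  ring

theorem srY_one (n : ℕ) : srY n 1 = n := rfl

theorem srY_succ (n : ℕ) {i : ℕ} (hi : 1 ≤ i) : srY n (i + 1) = srStep i (srY n i) := by
  obtain ⟨k, rfl⟩ := Nat.exists_eq_add_of_le' hi
  rfl

theorem sub_srStep_add_one_eq_ceil (i y : ℕ) :
    (y : ℤ) - srStep i y + 1 = ⌈((y : ℚ) - i) / (i + 1)⌉ := by
  have hfloor : ((i * (y + 1) / (i + 1) : ℕ) : ℤ) = ⌊((i * (y + 1) : ℕ) : ℚ) / (i + 1 : ℕ)⌋ := by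
    rw [Rat.floor_natCast_div_natCast]; norm_cast
  have hsplit : ((y : ℚ) - i) / (i + 1) = (y : ℤ) + -(((i * (y + 1) : ℕ) : ℚ) / (i + 1 : ℕ)) := by
    push_cast; field_simp; ring
  rw [hsplit, Int.ceil_intCast_add, Int.ceil_neg, ← hfloor, srStep]
  push_cast; ring

theorem strange_root_w_formula_general (n : ℕ) :
    ∀ i, 1 ≤ i → i ≤ sr n - 1 →
      ((srY n i : ℤ) - srY n (i + 1) + 1) =
        ⌈(((n : ℚ) - 1 -
            ∑ j ∈ Finset.Ico 1 i, ((srY n j : ℚ) - srY n (j + 1) + 1)) /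
          (i + 1))⌉ := by
  intro i hi _
  rw [Finset.sum_Ico_sub_succ_add_one (fun j ↦ (srY n j : ℚ)) hi, srY_one, srY_succ n hi,
    sub_srStep_add_one_eq_ceil]
  congr 2
  push_cast
  ring

/-- With `w_i = y_i - y_(i+1) + 1`, one has
`w_i = ⌈(n - 1 - (w_1 + ⋯ + w_(i-1))) / (i+1)⌉` for `1 ≤ i ≤ sr n - 1`. -/
theorem strange_root_w_formula (n : ℕ) (hn : 1 ≤ n) :
    ∀ i, 1 ≤ i → i ≤ sr n - 1 →
      ((srY n i : ℤ) - srY n (i + 1) + 1) =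
        ⌈(((n : ℚ) - 1 -
            ∑ j ∈ Finset.Ico 1 i, ((srY n j : ℚ) - srY n (j + 1) + 1)) /
          (i + 1))⌉ :=
  strange_root_w_formula_general n
end

section
/- If b = (b_1, …, b_ℓ) is the winning Tchoukaillon configuration with n ≥ 1 stones (so b_ℓ is its last nonzero entry), then b_ℓ = ℓ. -/
/-- A move of Tchoukaillon solitaire: select a hole `i ≥ 1` containing
`0 < c i ≤ i` stones, empty it, and add one stone to each of holes
`i - c i, …, i - 1` (a stone reaching hole `0` goes to the pit and
is not recorded). -/
def TchoukMove (c c' : ℕ → ℕ) : Prop :=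
  ∃ i, 1 ≤ i ∧ 0 < c i ∧ c i ≤ i ∧
    ∀ j, c' j = if j = i then 0
      else if 1 ≤ j ∧ i - c i ≤ j ∧ j < i then c j + 1 else c j

/-- A configuration (finitely supported, holes indexed from 1) is winning if
some sequence of moves empties all the holes. -/
def TchoukWinning (c : ℕ → ℕ) : Prop :=
  c 0 = 0 ∧ (Function.support c).Finite ∧
    Relation.ReflTransGen TchoukMove c (fun _ => 0)

/-- Auxiliary: `(tchoukAux n k).1 = c_k` and `(tchoukAux n k).2 = c_1 + ⋯ + c_k`
where `c_k = (n - (c_1 + ⋯ + c_{k-1})) % (k+1)`. -/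
def tchoukAux (n : ℕ) : ℕ → ℕ × ℕ
  | 0 => (0, 0)
  | (k+1) =>
      ((n - (tchoukAux n k).2) % (k + 2),
        (tchoukAux n k).2 + (n - (tchoukAux n k).2) % (k + 2))

/-- `tchouk n k` is the number of stones in hole `k` of the winning
Tchoukaillon configuration `Tchouk_n` (with `tchouk n 0 = 0`). -/
def tchouk (n k : ℕ) : ℕ := (tchoukAux n k).1

lemma aux_snd_le (n : ℕ) : ∀ k, (tchoukAux n k).2 ≤ n := by
  intro k
  induction k with
  | zero => simp [tchoukAux]
  | succ k ih =>
    have h := Nat.mod_le (n - (tchoukAux n k).2) (k + 2)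
    simp only [tchoukAux]
    omega

lemma aux_snd_succ (n k : ℕ) :
    (tchoukAux n (k+1)).2 = (tchoukAux n k).2 + tchouk n (k+1) := rfl

lemma aux_fst_succ (n k : ℕ) :
    tchouk n (k+1) = (n - (tchoukAux n k).2) % (k + 2) := rfl

/-- The last nonzero entry of `Tchouk_n` (for `n ≥ 1`) equals its index. -/
theorem tchouk_last_entry (n : ℕ) (hn : 1 ≤ n) (l : ℕ)
    (h1 : tchouk n l ≠ 0) (h2 : ∀ k, l < k → tchouk n k = 0) :
    tchouk n l = l := by
  -- S constant past l
  have hconst : ∀ k, l ≤ k → (tchoukAux n k).2 = (tchoukAux n l).2 := by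
    intro k hk
    induction k with
    | zero => rw [Nat.le_zero.mp hk]
    | succ k ih =>
      rcases Nat.lt_or_ge l (k+1) with h | h
      · have hl : l ≤ k := by omega
        rw [aux_snd_succ, h2 (k+1) h, ih hl, Nat.add_zero]
      · have : l = k + 1 := by omega
        rw [this]
  -- S_l = n
  have hSl : (tchoukAux n l).2 = n := by
    by_contra h
    have hlt : (tchoukAux n l).2 < n := lt_of_le_of_ne (aux_snd_le n l) h
    set K := max l n with hK
    have hKl : l ≤ K := le_max_left _ _
    have hKn : n ≤ K := le_max_right _ _
    have hSK : (tchoukAux n K).2 = (tchoukAux n l).2 := hconst K hKl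
    have hc : tchouk n (K+1) = (n - (tchoukAux n l).2) % (K + 2) := by
      rw [aux_fst_succ, hSK]
    have hmod : (n - (tchoukAux n l).2) % (K + 2) = n - (tchoukAux n l).2 :=
      Nat.mod_eq_of_lt (by omega)
    have : tchouk n (K+1) ≠ 0 := by rw [hc, hmod]; omega
    exact this (h2 (K+1) (by omega))
  -- l ≥ 1
  rcases Nat.eq_zero_or_pos l with rfl | hl
  · exact absurd rfl h1
  obtain ⟨m, rfl⟩ : ∃ m, l = m + 1 := ⟨l - 1, by omega⟩
  have hSm : (tchoukAux n m).2 ≤ n := aux_snd_le n m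
  have hle : tchouk n (m+1) ≤ m + 1 := by
    have := Nat.mod_lt (n - (tchoukAux n m).2) (show 0 < m + 2 by omega)
    rw [aux_fst_succ]; omega
  -- divisibility
  have hdvd : (m + 1) ∣ tchouk n (m+1) := by
    rcases Nat.eq_zero_or_pos m with rfl | hm
    · exact one_dvd _
    obtain ⟨p, rfl⟩ : ∃ p, m = p + 1 := ⟨m - 1, by omega⟩
    have hSl' : (tchoukAux n (p+2)).2 = n := hSl
    have hSp : (tchoukAux n p).2 ≤ n := aux_snd_le n p
    have hs1 : (tchoukAux n (p+1)).2 = (tchoukAux n p).2 + tchouk n (p+1) :=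
      aux_snd_succ n p
    have hs2 : (tchoukAux n (p+2)).2 = (tchoukAux n (p+1)).2 + tchouk n (p+2) :=
      aux_snd_succ n (p+1)
    have hsum : n - (tchoukAux n p).2 = tchouk n (p+1) + tchouk n (p+2) := by
      omega
    have hcp : tchouk n (p+1) = (tchouk n (p+1) + tchouk n (p+2)) % (p + 2) := by
      rw [← hsum]; exact aux_fst_succ n p
    have hclt : tchouk n (p+1) < p + 2 := by
      rw [hcp]; exact Nat.mod_lt _ (by omega)
    have hmodeq : tchouk n (p+1) + tchouk n (p+2) ≡ tchouk n (p+1) + 0 [MOD p+2] := by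
      show (tchouk n (p+1) + tchouk n (p+2)) % (p+2) = (tchouk n (p+1) + 0) % (p+2)
      rw [Nat.add_zero]; exact hcp.symm.trans (Nat.mod_eq_of_lt hclt).symm
    have hd : tchouk n (p+2) ≡ 0 [MOD p+2] := Nat.ModEq.add_left_cancel' _ hmodeq
    exact (Nat.modEq_zero_iff_dvd).mp hd
  have hpos : 0 < tchouk n (m+1) := Nat.pos_of_ne_zero h1
  exact Nat.le_antisymm hle (Nat.le_of_dvd hpos hdvd)
end

section
/- For all n ≥ 2, sr(n) equals the largest index ℓ with nonzero entry in Tchouk_{n−1}, plus 1; equivalently, sr(n) = 1 + length(Tchouk_{n−1}) = 1 + final(Tchouk_{n−1}), where final denotes the last nonzero entry. -/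
/-!
Let `R_k = tchoukRem m k = m - (c_1 + ⋯ + c_k)`, the stones of `Tchouk_m` not in holes `1, …, k`. As
`c_(k+1) = R_k mod (k+2)`, each `R_(k+1)` is a multiple of `k + 2`, and the strange-root process
from `⟨1, m + 1⟩` satisfies `(k+1) y_(k+1) = R_k + (k+1)²`. Hence `y_(k+1) ≤ k + 1` exactly when
`R_k = 0`, so `sr (m+1)` is one more than the length `ℓ` of `Tchouk_m`. In the last hole the
remainder `R_(ℓ-1)` is placed whole, so it is below `ℓ + 1`; being a positive multiple of `ℓ`, it
equals `ℓ`, and so does `c_ℓ`.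
-/

def tchoukRem (m k : ℕ) : ℕ := m - (tchoukAux m k).2

@[simp]
theorem tchoukRem_zero (m : ℕ) : tchoukRem m 0 = m := rfl

theorem tchouk_succ (m k : ℕ) : tchouk m (k + 1) = tchoukRem m k % (k + 2) := rfl

theorem tchoukRem_succ (m k : ℕ) : tchoukRem m (k + 1) = tchoukRem m k - tchouk m (k + 1) :=
  (Nat.sub_sub _ _ _).symm

theorem tchoukRem_succ_eq_mul (m k : ℕ) :
    tchoukRem m (k + 1) = (k + 2) * (tchoukRem m k / (k + 2)) := by
  rw [tchoukRem_succ, tchouk_succ, Nat.mul_div_self_eq_mod_sub_self]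

theorem dvd_tchoukRem (m k : ℕ) : k + 1 ∣ tchoukRem m k := by
  cases k with
  | zero => exact one_dvd _
  | succ k => exact tchoukRem_succ_eq_mul m k ▸ dvd_mul_right _ _

theorem tchoukRem_antitone (m : ℕ) : Antitone (tchoukRem m) :=
  antitone_nat_of_succ_le fun k => tchoukRem_succ m k ▸ Nat.sub_le _ _

theorem tchoukRem_le (m k : ℕ) : tchoukRem m k ≤ m :=
  tchoukRem_zero m ▸ tchoukRem_antitone m (Nat.zero_le k)

theorem tchoukRem_eq_of_tchouk_eq_zero {m l : ℕ} (h : ∀ k, l < k → tchouk m k = 0) :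
    ∀ k, l ≤ k → tchoukRem m k = tchoukRem m l := by
  refine Nat.le_induction rfl fun k hk ih => ?_
  rw [tchoukRem_succ, h (k + 1) (by omega), Nat.sub_zero, ih]

theorem tchoukRem_eq_zero_of_tchouk_eq_zero {m l : ℕ} (h : ∀ k, l < k → tchouk m k = 0) :
    tchoukRem m l = 0 := by
  have hconst := tchoukRem_eq_of_tchouk_eq_zero h
  -- Past hole `m`, the remainder is smaller than the modulus, so it is placed whole.
  have hplaced : tchouk m (m + l + 1) = tchoukRem m (m + l) := by
    rw [tchouk_succ]
    exact Nat.mod_eq_of_lt (by have := tchoukRem_le m (m + l); omega)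
  rw [← hconst (m + l) (by omega), ← hplaced]
  exact h _ (by omega)

/-- `srStep (i + 1)` divides by `i + 2` just as the recursion of `tchoukAux` does. -/
theorem mul_srY_succ (m i : ℕ) :
    (i + 1) * srY (m + 1) (i + 1) = tchoukRem m i + (i + 1) * (i + 1) := by
  induction i with
  | zero => simp [srY]
  | succ i ih =>
    set r := tchoukRem m i
    have hnum : (i + 1) * (srY (m + 1) (i + 1) + 1) =
        (i + 2) * (r / (i + 2) + (i + 1)) + r % (i + 2) := by
      have := Nat.div_add_mod r (i + 2)
      linear_combination ih - this
    have hdiv : (i + 1) * (srY (m + 1) (i + 1) + 1) / (i + 2) = r / (i + 2) + (i + 1) := by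
      rw [hnum, Nat.mul_add_div (by omega), Nat.div_eq_of_lt (Nat.mod_lt _ (by omega)), add_zero]
    rw [show srY (m + 1) (i + 2) = srStep (i + 1) (srY (m + 1) (i + 1)) from rfl, srStep, hdiv,
      tchoukRem_succ_eq_mul]
    ring

theorem srY_succ_le_iff (m i : ℕ) : srY (m + 1) (i + 1) ≤ i + 1 ↔ tchoukRem m i = 0 := by
  rw [← Nat.mul_le_mul_left_iff (show 0 < i + 1 by omega), mul_srY_succ]
  omega

theorem sr_succ_eq {m i : ℕ} (h : tchoukRem m i = 0) (hpos : ∀ j < i, tchoukRem m j ≠ 0) :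
    sr (m + 1) = i + 1 := by
  refine IsLeast.csInf_eq ⟨⟨by omega, (srY_succ_le_iff m i).2 h⟩, ?_⟩
  rintro r ⟨hr, hle⟩
  obtain ⟨j, rfl⟩ : ∃ j, r = j + 1 := ⟨r - 1, by omega⟩
  by_contra! hlt
  exact hpos j (by omega) ((srY_succ_le_iff m j).1 hle)

/-- For `n ≥ 2`, `sr n` is one more than the index of the last nonzero
entry of `Tchouk_(n-1)`, and also one more than the value of that entry. -/
theorem sr_eq_tchouk_length_final (n : ℕ) (hn : 2 ≤ n) (l : ℕ)
    (h1 : tchouk (n - 1) l ≠ 0) (h2 : ∀ k, l < k → tchouk (n - 1) k = 0) :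
    sr n = l + 1 ∧ sr n = tchouk (n - 1) l + 1 := by
  obtain ⟨m, rfl⟩ : ∃ m, n = m + 1 := ⟨n - 1, by omega⟩
  obtain ⟨i, rfl⟩ : ∃ i, l = i + 1 := Nat.exists_eq_succ_of_ne_zero (by rintro rfl; exact h1 rfl)
  rw [Nat.add_sub_cancel] at h1 h2 ⊢
  have hzero : tchoukRem m (i + 1) = 0 := tchoukRem_eq_zero_of_tchouk_eq_zero h2
  rw [tchoukRem_succ, Nat.sub_eq_zero_iff_le, tchouk_succ] at hzero
  rw [tchouk_succ] at h1 ⊢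
  -- The last entry receives the whole remainder, a positive multiple of `i + 1` below `i + 2`.
  have hmod : tchoukRem m i % (i + 2) = tchoukRem m i := le_antisymm (Nat.mod_le _ _) hzero
  have hrem : tchoukRem m i = i + 1 :=
    Nat.eq_of_dvd_of_lt_two_mul (hmod ▸ h1) (dvd_tchoukRem m i)
      (by have := Nat.mod_lt (tchoukRem m i) (show 0 < i + 2 by omega); omega)
  have hsr : sr (m + 1) = i + 2 := by
    refine sr_succ_eq (by rw [tchoukRem_succ, tchouk_succ, hmod, Nat.sub_self]) fun j hj => ?_
    have := tchoukRem_antitone m (Nat.lt_succ_iff.mp hj)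
    omega
  exact ⟨hsr, by rw [hsr, hmod, hrem]⟩
end

section
/- Suppose ⟨i, u⟩ → ⟨i+1, v⟩ is a transition of the strange-root process. If i divides v − 1 then u ∈ {v − 2 + (v−1)/i, v − 1 + (v−1)/i}; if i does not divide v − 1 then u = v − 1 + ⌊(v−1)/i⌋. -/
/-- For a transition `⟨i, u⟩ → ⟨i+1, v⟩` of the strange-root process:
if `i ∣ v - 1` then `u ∈ {v - 2 + (v-1)/i, v - 1 + (v-1)/i}`, and otherwise
`u = v - 1 + ⌊(v-1)/i⌋`. -/
theorem strange_root_predecessor (i u v : ℕ) (hi : 1 ≤ i) (hu : i < u)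
    (h1 : i * (u + 1) < (i + 1) * v)
    (h2 : ∀ z : ℕ, i * (u + 1) < (i + 1) * z → v ≤ z) :
    (i ∣ v - 1 →
      u = v - 2 + (v - 1) / i ∨ u = v - 1 + (v - 1) / i) ∧
    (¬ i ∣ v - 1 → u = v - 1 + (v - 1) / i) := by
  have hi0 : (0:ℤ) < i := by exact_mod_cast hi
  have hv2 : 2 ≤ v := by nlinarith
  have hA : (i+1)*(v-1) ≤ i*(u+1) := by
    by_contra h
    push_neg at h
    have := h2 (v-1) h
    omega
  set q := (v-1)/i with hq
  set r := (v-1)%i with hr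
  have hdiv : v - 1 = i*q + r := (Nat.div_add_mod _ _).symm
  have hrlt : r < i := Nat.mod_lt _ hi
  set D : ℤ := (i:ℤ)*(u+1) - (i+1)*((v:ℤ)-1) with hD
  have hD0 : 0 ≤ D := by
    have h' := hA
    zify [show 1 ≤ v by omega] at h'
    simp [hD]; linarith
  have hDi : D ≤ i := by
    have h' : (i:ℤ)*(u+1) < ((i:ℤ)+1)*v := by exact_mod_cast h1
    simp [hD]; nlinarith
  have hcast : (v:ℤ) - 1 = (i:ℤ)*q + r := by
    have := hdiv
    omega
  have key : (i:ℤ) * ((u:ℤ) + 2 - v - q) = D + r := by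
    rw [hD]; nlinarith [hcast]
  have hm : (i:ℤ) ∣ (D + r) := ⟨_, key.symm⟩
  obtain ⟨k, hk⟩ := hm
  have hk0 : 0 ≤ k := by nlinarith
  have hk1 : k ≤ 1 := by nlinarith [hk, hD0, hDi, (by exact_mod_cast hrlt.le : (r:ℤ) ≤ i)]
  have heq : (u:ℤ) + 2 - v - q = k := by
    have := key.trans hk
    exact mul_left_cancel₀ (by positivity) this
  have hrz : i ∣ v - 1 ↔ r = 0 := by
    rw [hr, Nat.dvd_iff_mod_eq_zero]
  constructor
  · intro hdvd
    have hr0 : r = 0 := hrz.mp hdvd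
    interval_cases k
    · left; omega
    · right; omega
  · intro hnd
    have hr0 : r ≠ 0 := fun h => hnd (hrz.mpr h)
    have hk1' : k = 1 := by
      rcases (by omega : k = 0 ∨ k = 1) with h | h
      · exfalso
        rw [h, mul_zero] at hk
        have : (r:ℤ) = 0 := by linarith
        exact hr0 (by exact_mod_cast this)
      · exact h
    omega
end
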